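/- (Rota's exponential generating function for Bell numbers, eq. (1).) For every real number x, the series Σ_{n=0}^{∞} B_n·x^n/n! converges and Σ_{n=0}^{∞} B_n·x^n/n! = exp(e^x − 1), where B_n is the n-th Bell number. -/

import Mathlib

/-- The Stirling numbers of the second kind. -/
def stirling2 : ℕ → ℕ → ℕ
  | 0, 0 => 1
  | 0, _ + 1 => 0
  | _ + 1, 0 => 0
  | n + 1, k + 1 => stirling2 n k + (k + 1) * stirling2 n (k + 1)

/-- The n-th Bell number `B_n = Σ_{k=0}^{n} S(n,k)`. -/
def bell (n : ℕ) : ℕ :=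
  ∑ k ∈ Finset.range (n + 1), stirling2 n k

open Finset

/-- The signed sum appearing in the explicit formula for Stirling numbers. -/
private def S2sum (n k : ℕ) : ℤ :=
  ∑ j ∈ Finset.range (k + 1), (-1 : ℤ) ^ (k + j) * (k.choose j) * (j : ℤ) ^ n

private lemma S2sum_succ_succ (n k : ℕ) :
    S2sum (n + 1) (k + 1)
      = (k + 1) * ∑ i ∈ range (k + 1), (-1 : ℤ) ^ (k + i) * (k.choose i) * ((i : ℤ) + 1) ^ n := by
  rw [S2sum, Finset.sum_range_succ', Finset.mul_sum]
  simp only [Nat.cast_zero, zero_pow (Nat.succ_ne_zero n), mul_zero, add_zero]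
  refine Finset.sum_congr rfl fun i _ => ?_
  have hs : (-1 : ℤ) ^ (k + 1 + (i + 1)) = (-1) ^ (k + i) := by
    rw [show k + 1 + (i + 1) = (k + i) + 2 from by ring, pow_add]; ring
  have hc : (((k + 1).choose (i + 1) : ℤ)) * ((i : ℤ) + 1) = (k + 1) * (k.choose i : ℤ) := by
    have h : (k + 1).choose (i + 1) * (i + 1) = (k + 1) * k.choose i :=
      (Nat.add_one_mul_choose_eq k i).symm
    exact_mod_cast h
  rw [hs]
  push_cast
  calc (-1 : ℤ) ^ (k + i) * ((k + 1).choose (i + 1) : ℤ) * ((i : ℤ) + 1) ^ (n + 1)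
      = (-1 : ℤ) ^ (k + i) * ((((k + 1).choose (i + 1) : ℤ)) * ((i : ℤ) + 1)) * ((i : ℤ) + 1) ^ n := by
        rw [pow_succ]; ring
    _ = _ := by rw [hc]; ring

private lemma S2sum_add (n k : ℕ) :
    S2sum n k + S2sum n (k + 1)
      = ∑ i ∈ range (k + 1), (-1 : ℤ) ^ (k + i) * (k.choose i) * ((i : ℤ) + 1) ^ n := by
  rw [S2sum, S2sum, Finset.sum_range_succ' _ (k + 1), Finset.sum_range_succ' _ k]
  have h0 : (-1 : ℤ) ^ (k + 0) * (k.choose 0) * (0 : ℤ) ^ n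
      + (-1 : ℤ) ^ (k + 1 + 0) * ((k + 1).choose 0) * (0 : ℤ) ^ n = 0 := by
    simp [pow_succ]
  push_cast at h0 ⊢
  rw [show ((∑ i ∈ range k, (-1:ℤ)^(k+(i+1)) * (k.choose (i+1)) * ((i:ℤ)+1)^n)
        + (-1:ℤ)^(k+0) * (k.choose 0) * (0:ℤ)^n)
      + ((∑ i ∈ range (k+1), (-1:ℤ)^(k+1+(i+1)) * ((k+1).choose (i+1)) * ((i:ℤ)+1)^n)
        + (-1:ℤ)^(k+1+0) * ((k+1).choose 0) * (0:ℤ)^n)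
      = ((∑ i ∈ range k, (-1:ℤ)^(k+(i+1)) * (k.choose (i+1)) * ((i:ℤ)+1)^n)
        + (∑ i ∈ range (k+1), (-1:ℤ)^(k+1+(i+1)) * ((k+1).choose (i+1)) * ((i:ℤ)+1)^n))
      + (((-1:ℤ)^(k+0) * (k.choose 0) * (0:ℤ)^n)
        + ((-1:ℤ)^(k+1+0) * ((k+1).choose 0) * (0:ℤ)^n)) from by ring, h0, add_zero]
  have hsplit : ∀ i ∈ range (k + 1),
      (-1:ℤ)^(k+1+(i+1)) * (((k+1).choose (i+1) : ℤ)) * ((i:ℤ)+1)^n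
        = (-1:ℤ)^(k+i) * (k.choose i) * ((i:ℤ)+1)^n
          + (-1:ℤ)^(k+i) * (k.choose (i+1)) * ((i:ℤ)+1)^n := by
    intro i _
    have hs : (-1 : ℤ) ^ (k + 1 + (i + 1)) = (-1) ^ (k + i) := by
      rw [show k + 1 + (i + 1) = (k + i) + 2 from by ring, pow_add]; ring
    rw [hs, Nat.choose_succ_succ]
    push_cast
    ring
  rw [Finset.sum_congr rfl hsplit, Finset.sum_add_distrib]
  have hlast : (∑ i ∈ range (k+1), (-1:ℤ)^(k+i) * (k.choose (i+1)) * ((i:ℤ)+1)^n)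
      = ∑ i ∈ range k, (-1:ℤ)^(k+i) * (k.choose (i+1)) * ((i:ℤ)+1)^n := by
    rw [Finset.sum_range_succ, Nat.choose_succ_self]
    simp
  rw [hlast]
  have hcancel : (∑ i ∈ range k, (-1:ℤ)^(k+(i+1)) * (k.choose (i+1)) * ((i:ℤ)+1)^n)
      + (∑ i ∈ range k, (-1:ℤ)^(k+i) * (k.choose (i+1)) * ((i:ℤ)+1)^n) = 0 := by
    rw [← Finset.sum_add_distrib]
    refine Finset.sum_eq_zero fun i _ => ?_
    rw [show k + (i + 1) = (k + i) + 1 from by ring, pow_succ]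
    ring
  linarith [hcancel]

private lemma stirling2_formula (n : ℕ) : ∀ k, (k.factorial : ℤ) * stirling2 n k = S2sum n k := by
  induction n with
  | zero =>
    intro k
    cases k with
    | zero => simp [stirling2, S2sum]
    | succ k =>
      have : S2sum 0 (k + 1) = ((-1 : ℤ) ^ (k + 1)) * ∑ j ∈ range (k + 2), (-1:ℤ)^j * ((k+1).choose j) := by
        rw [S2sum, Finset.mul_sum]
        refine Finset.sum_congr rfl fun j _ => ?_
        rw [pow_add]
        ring
      rw [this, Int.alternating_sum_range_choose_of_ne (Nat.succ_ne_zero k)]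
      simp [stirling2]
  | succ n ih =>
    intro k
    cases k with
    | zero =>
      simp [stirling2, S2sum, zero_pow (Nat.succ_ne_zero n)]
    | succ k =>
      have h1 : (((k+1).factorial : ℤ)) * stirling2 (n+1) (k+1)
          = (k+1) * ((k.factorial : ℤ) * stirling2 n k)
            + (k+1) * (((k+1).factorial : ℤ) * stirling2 n (k+1)) := by
        show (((k+1).factorial : ℤ)) * (stirling2 n k + (k + 1) * stirling2 n (k+1) : ℕ) = _
        rw [Nat.factorial_succ]
        push_cast
        ring
      rw [h1, ih k, ih (k+1), S2sum_succ_succ n k, ← S2sum_add n k]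
      ring

private lemma stirling2_eq_zero : ∀ n k : ℕ, n < k → stirling2 n k = 0 := by
  intro n
  induction n with
  | zero => intro k hk; cases k with
    | zero => omega
    | succ k => rfl
  | succ n ih =>
    intro k hk
    cases k with
    | zero => omega
    | succ k =>
      show stirling2 n k + (k + 1) * stirling2 n (k + 1) = 0
      rw [ih k (by omega), ih (k + 1) (by omega)]
      ring

private lemma hasSum_exp (c : ℝ) :
    HasSum (fun n : ℕ => c ^ n / (Nat.factorial n : ℝ)) (Real.exp c) := by
  have h := (Real.summable_pow_div_factorial c).hasSum
  have : Real.exp c = ∑' n : ℕ, c ^ n / (Nat.factorial n : ℝ) := by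
    rw [Real.exp_eq_exp_ℝ, NormedSpace.exp_eq_tsum_div]
  rwa [this]

private lemma stirling2_hasSum (k : ℕ) (x : ℝ) :
    HasSum (fun n : ℕ => (stirling2 n k : ℝ) * x ^ n / (Nat.factorial n : ℝ))
      ((Real.exp x - 1) ^ k / (Nat.factorial k : ℝ)) := by
  have hkfac : (Nat.factorial k : ℝ) ≠ 0 := Nat.cast_ne_zero.mpr k.factorial_ne_zero
  have key : ∀ n : ℕ, (stirling2 n k : ℝ) * x ^ n / (Nat.factorial n : ℝ)
      = ∑ j ∈ range (k + 1),
          ((-1 : ℝ) ^ (k + j) * (k.choose j) / (Nat.factorial k : ℝ))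
            * (((j : ℝ) * x) ^ n / (Nat.factorial n : ℝ)) := by
    intro n
    have hf : (Nat.factorial k : ℝ) * (stirling2 n k : ℝ)
        = ∑ j ∈ range (k + 1), (-1 : ℝ) ^ (k + j) * (k.choose j) * (j : ℝ) ^ n := by
      have := stirling2_formula n k
      rw [S2sum] at this
      exact_mod_cast this
    have hst : (stirling2 n k : ℝ)
        = (∑ j ∈ range (k + 1), (-1 : ℝ) ^ (k + j) * (k.choose j) * (j : ℝ) ^ n)
            / (Nat.factorial k : ℝ) := by
      field_simp [← hf]
      rw [← hf]; ring
    rw [hst, Finset.sum_div, Finset.sum_mul, Finset.sum_div]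
    refine Finset.sum_congr rfl fun j _ => ?_
    rw [mul_pow]
    field_simp
  have hterm : ∀ j ∈ range (k + 1),
      HasSum (fun n : ℕ => ((-1 : ℝ) ^ (k + j) * (k.choose j) / (Nat.factorial k : ℝ))
            * (((j : ℝ) * x) ^ n / (Nat.factorial n : ℝ)))
        (((-1 : ℝ) ^ (k + j) * (k.choose j) / (Nat.factorial k : ℝ)) * Real.exp ((j : ℝ) * x)) :=
    fun j _ => (hasSum_exp ((j : ℝ) * x)).mul_left _
  have htot := hasSum_sum hterm
  have hval : (∑ j ∈ range (k + 1),
      ((-1 : ℝ) ^ (k + j) * (k.choose j) / (Nat.factorial k : ℝ)) * Real.exp ((j : ℝ) * x))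
        = (Real.exp x - 1) ^ k / (Nat.factorial k : ℝ) := by
    have hbin : (Real.exp x + (-1)) ^ k
        = ∑ j ∈ range (k + 1), (Real.exp x) ^ j * (-1 : ℝ) ^ (k - j) * (k.choose j) :=
      add_pow _ _ _
    have : (Real.exp x - 1) ^ k
        = ∑ j ∈ range (k + 1), (Real.exp x) ^ j * (-1 : ℝ) ^ (k - j) * (k.choose j) := by
      rw [← hbin]; ring_nf
    rw [this, Finset.sum_div]
    refine Finset.sum_congr rfl fun j hj => ?_
    have hjk : j ≤ k := Nat.lt_succ_iff.mp (Finset.mem_range.mp hj)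
    have hsgn : (-1 : ℝ) ^ (k + j) = (-1) ^ (k - j) := by
      rw [show k + j = (k - j) + 2 * j from by omega, pow_add, pow_mul]
      simp
    rw [hsgn, Real.exp_nat_mul]
    ring
  rw [hval] at htot
  exact htot.congr_fun fun n => key n

/-- Rota's exponential generating function for Bell numbers, eq. (1):
for every real `x`, `Σ_{n≥0} B_n·x^n/n!` converges and equals `exp(e^x − 1)`. -/
theorem bell_egf (x : ℝ) :
    (Summable fun n : ℕ => (bell n : ℝ) * x ^ n / (Nat.factorial n : ℝ)) ∧
    (∑' n : ℕ, (bell n : ℝ) * x ^ n / (Nat.factorial n : ℝ)) =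
      Real.exp (Real.exp x - 1) := by
  set g : ℕ × ℕ → ℝ := fun p => (stirling2 p.2 p.1 : ℝ) * x ^ p.2 / (Nat.factorial p.2 : ℝ)
    with hgdef
  -- absolute summability of the double family
  have habs : Summable fun p : ℕ × ℕ =>
      (stirling2 p.2 p.1 : ℝ) * |x| ^ p.2 / (Nat.factorial p.2 : ℝ) := by
    rw [summable_prod_of_nonneg (fun p => by positivity)]
    refine ⟨fun k => (stirling2_hasSum k |x|).summable, ?_⟩
    have h1 : ∀ k : ℕ, (∑' n : ℕ, (stirling2 n k : ℝ) * |x| ^ n / (Nat.factorial n : ℝ))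
        = (Real.exp |x| - 1) ^ k / (Nat.factorial k : ℝ) :=
      fun k => (stirling2_hasSum k |x|).tsum_eq
    exact (Real.summable_pow_div_factorial (Real.exp |x| - 1)).congr fun k => (h1 k).symm
  have hgsum : Summable g := by
    rw [← summable_abs_iff]
    refine habs.congr fun p => ?_
    rw [hgdef]
    simp only [abs_div, abs_mul, abs_pow, Nat.abs_cast]
  -- sum over the product, grouping by k
  have hvalk : ∀ k : ℕ, (∑' n : ℕ, g (k, n))
      = (Real.exp x - 1) ^ k / (Nat.factorial k : ℝ) :=
    fun k => (stirling2_hasSum k x).tsum_eq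
  have hprod : (∑' p : ℕ × ℕ, g p) = Real.exp (Real.exp x - 1) := by
    rw [Summable.tsum_prod hgsum, tsum_congr hvalk, (hasSum_exp (Real.exp x - 1)).tsum_eq]
  -- grouping by n gives the Bell numbers
  have hswap : Summable (fun p : ℕ × ℕ => g (p.2, p.1)) := hgsum.prod_symm
  have hfin : ∀ n : ℕ, (∑' k : ℕ, g (k, n)) = (bell n : ℝ) * x ^ n / (Nat.factorial n : ℝ) := by
    intro n
    rw [tsum_eq_sum (s := Finset.range (n + 1))
      (fun k hk => by
        rw [hgdef]
        simp only
        rw [stirling2_eq_zero n k (by simpa using hk)]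
        simp)]
    rw [hgdef, bell]
    simp only
    rw [← Finset.sum_div, ← Finset.sum_mul, Nat.cast_sum]
  have hsummable : Summable fun n : ℕ => (bell n : ℝ) * x ^ n / (Nat.factorial n : ℝ) :=
    hswap.prod.congr fun n => hfin n
  refine ⟨hsummable, ?_⟩
  have hcomm : (∑' (n : ℕ) (k : ℕ), g (k, n)) = ∑' (k : ℕ) (n : ℕ), g (k, n) :=
    Summable.tsum_comm (f := fun k n => g (k, n)) hgsum
  calc (∑' n : ℕ, (bell n : ℝ) * x ^ n / (Nat.factorial n : ℝ))
      = ∑' (n : ℕ) (k : ℕ), g (k, n) := (tsum_congr hfin).symm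
    _ = ∑' (k : ℕ) (n : ℕ), g (k, n) := hcomm
    _ = ∑' p : ℕ × ℕ, g p := (Summable.tsum_prod hgsum).symm
    _ = Real.exp (Real.exp x - 1) := hprod
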